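/- For real ρ_x > 0 and real ρ_y, ρ_xy, ϱ_x, ϱ_y, ε > 0, the double integral ∫_{−ε}^{ε}∫_{−ε}^{ε} exp(−ρ_x x² − ρ_y y² − ρ_xy x y − ϱ_x x − ϱ_y y) dx dy equals (√π/(2√ρ_x)) ∫_{−ε}^{ε} exp(−ρ_y y² − ϱ_y y + (ρ_xy y + ϱ_x)²/(4ρ_x)) · [erf((ρ_xy y + 2ρ_x ε + ϱ_x)/(2√ρ_x)) − erf((ρ_xy y − 2ρ_x ε + ϱ_x)/(2√ρ_x))] dy. -/

import Mathlib

open Real MeasureTheory intervalIntegral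

/-- The real error function `erf x = (2/√π) ∫₀ˣ exp(−t²) dt`. -/
noncomputable def rerf (x : ℝ) : ℝ :=
  (2 / Real.sqrt Real.pi) * ∫ t in (0:ℝ)..x, Real.exp (-t ^ 2)

lemma erf_sub (u v : ℝ) :
    ∫ t in u..v, Real.exp (-t ^ 2) = Real.sqrt Real.pi / 2 * (rerf v - rerf u) := by
  have hcont : Continuous fun t : ℝ => Real.exp (-t ^ 2) := by continuity
  have h : (∫ t in (0:ℝ)..v, Real.exp (-t ^ 2)) - ∫ t in (0:ℝ)..u, Real.exp (-t ^ 2)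
      = ∫ t in u..v, Real.exp (-t ^ 2) :=
    intervalIntegral.integral_interval_sub_left (hcont.intervalIntegrable _ _)
      (hcont.intervalIntegrable _ _)
  have hpi : Real.sqrt Real.pi ≠ 0 := by positivity
  rw [← h, rerf, rerf]
  field_simp

lemma gauss_aux (a b ε : ℝ) (ha : 0 < a) :
    ∫ x in -ε..ε, Real.exp (-a * x ^ 2 - b * x)
      = Real.sqrt Real.pi / (2 * Real.sqrt a) * Real.exp (b ^ 2 / (4 * a)) *
        (rerf ((b + 2 * a * ε) / (2 * Real.sqrt a)) -
          rerf ((b - 2 * a * ε) / (2 * Real.sqrt a))) := by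
  obtain ⟨s, hs0, rfl⟩ : ∃ s : ℝ, 0 < s ∧ s ^ 2 = a :=
    ⟨Real.sqrt a, Real.sqrt_pos.2 ha, Real.sq_sqrt ha.le⟩
  have hss : Real.sqrt (s ^ 2) = s := Real.sqrt_sq hs0.le
  have hs : s ≠ 0 := hs0.ne'
  simp only [hss]
  have h1 : ∀ x : ℝ, Real.exp (-s ^ 2 * x ^ 2 - b * x)
      = Real.exp (b ^ 2 / (4 * s ^ 2)) *
        Real.exp (-(s * x + b / (2 * s)) ^ 2) := by
    intro x
    rw [← Real.exp_add]
    congr 1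
    field_simp
    ring
  simp only [h1]
  rw [intervalIntegral.integral_const_mul]
  have h2 : (∫ x in -ε..ε, Real.exp (-(s * x + b / (2 * s)) ^ 2))
      = s⁻¹ •
        ∫ t in (s * (-ε) + b / (2 * s))..(s * ε + b / (2 * s)),
          Real.exp (-t ^ 2) :=
    intervalIntegral.integral_comp_mul_add (fun t => Real.exp (-t ^ 2)) hs _
  have e1 : s * (-ε) + b / (2 * s) = (b - 2 * s ^ 2 * ε) / (2 * s) := by
    field_simp; ring
  have e2 : s * ε + b / (2 * s) = (b + 2 * s ^ 2 * ε) / (2 * s) := by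
    field_simp; ring
  rw [h2, e1, e2, erf_sub]
  rw [smul_eq_mul]
  field_simp

/-- Reduction of the double integral over the square lens aperture to a single
integral by completing the square in `x` (key step of Theorem 2, out-of-plane
reflection channel gain). -/
theorem aperture_integral_reduction (ρx ρy ρxy ϱx ϱy ε : ℝ)
    (hρx : 0 < ρx) (hε : 0 < ε) :
    (∫ y in -ε..ε, ∫ x in -ε..ε,
        Real.exp (-ρx * x ^ 2 - ρy * y ^ 2 - ρxy * x * y - ϱx * x - ϱy * y)) =
      (Real.sqrt Real.pi / (2 * Real.sqrt ρx)) *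
        ∫ y in -ε..ε,
          Real.exp (-ρy * y ^ 2 - ϱy * y + (ρxy * y + ϱx) ^ 2 / (4 * ρx)) *
            (rerf ((ρxy * y + 2 * ρx * ε + ϱx) / (2 * Real.sqrt ρx)) -
              rerf ((ρxy * y - 2 * ρx * ε + ϱx) / (2 * Real.sqrt ρx))) := by
  rw [← intervalIntegral.integral_const_mul]
  apply intervalIntegral.integral_congr
  intro y _
  have h1 : ∀ x : ℝ, Real.exp (-ρx * x ^ 2 - ρy * y ^ 2 - ρxy * x * y - ϱx * x - ϱy * y)
      = Real.exp (-ρx * x ^ 2 - (ρxy * y + ϱx) * x) * Real.exp (-ρy * y ^ 2 - ϱy * y) := by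
    intro x; rw [← Real.exp_add]; ring_nf
  simp only [h1]
  rw [intervalIntegral.integral_mul_const, gauss_aux _ _ _ hρx]
  have e1 : ρxy * y + ϱx + 2 * ρx * ε = ρxy * y + 2 * ρx * ε + ϱx := by ring
  have e2 : ρxy * y + ϱx - 2 * ρx * ε = ρxy * y - 2 * ρx * ε + ϱx := by ring
  rw [e1, e2, Real.exp_add]
  ring
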